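/- Let X, E₁ : [0, T*] → [0,∞) be continuous with E₁(t) ≤ X(t). Suppose X(t) ≤ 2M₀ on [0,T*], E₁(0) < δ with δ ≤ min{δ₁, δ₂}, and the barrier inequalities hold: (i) E₁(T) + ∫₀ᵀ k(E₁(t),X(t)) dt ≤ C₄E₁(0) for all T ≤ T*, where k(x,y) = C₃x − C₄∑ⱼ x^{γⱼ}y^{τⱼ} with γⱼ > 1, τⱼ > 0; (ii) the unique positive root a of C₃ − C₄∑ⱼ x^{γⱼ−1}(2M₀)^{τⱼ} = C₃/2 satisfies δ₂ = a/(2C₄). Then k(E₁(t),X(t)) ≥ (C₃/2)E₁(t) for all t ∈ [0,T*], i.e., the set {t : k(E₁(s),X(s)) ≥ (C₃/2)E₁(s) for all s ≤ t} is all of [0,T*] (continuation/barrier argument: T** = T*). -/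

import Mathlib

open MeasureTheory
open scoped BigOperators

/-!
For `x ≤ a` and `y ≤ 2M₀` each term of the nonlinearity satisfies
`x^γⱼ y^τⱼ ≤ x a^{γⱼ-1} (2M₀)^{τⱼ}`, so by the choice of `a` the bound `k(x,y) ≥ (C₃/2) x`
holds as long as `E₁ ≤ a`. While it holds, `k ≥ 0` and the barrier inequality gives
`E₁(T) ≤ C₄ E₁(0) < a/2`, so `E₁` can never reach `a`: at a first time `t₀` with
`E₁(t₀) ≥ a`, continuity gives `E₁ ≤ a` on `[0, t₀]` and hence `E₁(t₀) < a/2`.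
-/

theorem Real.rpow_le_mul_rpow_sub_one {x a γ : ℝ} (hx : 0 ≤ x) (hxa : x ≤ a) (hγ : 1 ≤ γ) :
    x ^ γ ≤ x * a ^ (γ - 1) :=
  calc x ^ γ = x ^ ((1 : ℝ) + (γ - 1)) := by rw [add_sub_cancel]
    _ = x * x ^ (γ - 1) := by rw [Real.rpow_add' hx (by linarith), Real.rpow_one]
    _ ≤ x * a ^ (γ - 1) :=
      mul_le_mul_of_nonneg_left (Real.rpow_le_rpow hx hxa (by linarith)) hx

theorem Finset.sum_rpow_mul_rpow_le {ι : Type*} (s : Finset ι) {γ τ : ι → ℝ} {x y a b : ℝ}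
    (hx : 0 ≤ x) (hxa : x ≤ a) (hy : 0 ≤ y) (hyb : y ≤ b)
    (hγ : ∀ j ∈ s, 1 ≤ γ j) (hτ : ∀ j ∈ s, 0 ≤ τ j) :
    ∑ j ∈ s, x ^ γ j * y ^ τ j ≤ x * ∑ j ∈ s, a ^ (γ j - 1) * b ^ τ j := by
  rw [Finset.mul_sum]
  refine Finset.sum_le_sum fun j hj => ?_
  rw [← mul_assoc]
  exact mul_le_mul (Real.rpow_le_mul_rpow_sub_one hx hxa (hγ j hj))
    (Real.rpow_le_rpow hy hyb (hτ j hj)) (Real.rpow_nonneg hy _)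
    (mul_nonneg hx (Real.rpow_nonneg (hx.trans hxa) _))

theorem half_mul_le_sub_sum_rpow_mul_rpow {ι : Type*} [Fintype ι] {γ τ : ι → ℝ}
    {C₃ C₄ x y a b : ℝ} (hC₄ : 0 ≤ C₄) (hγ : ∀ j, 1 ≤ γ j) (hτ : ∀ j, 0 ≤ τ j)
    (ha : C₄ * ∑ j, a ^ (γ j - 1) * b ^ τ j = C₃ / 2)
    (hx : 0 ≤ x) (hxa : x ≤ a) (hy : 0 ≤ y) (hyb : y ≤ b) :
    C₃ / 2 * x ≤ C₃ * x - C₄ * ∑ j, x ^ γ j * y ^ τ j := by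
  have hsum := Finset.univ.sum_rpow_mul_rpow_le hx hxa hy hyb (fun j _ => hγ j) (fun j _ => hτ j)
  have := mul_le_mul_of_nonneg_left hsum hC₄
  rw [mul_left_comm, ha] at this
  linarith

theorem le_of_add_intervalIntegral_le {f g : ℝ → ℝ} {T c a : ℝ}
    (hf : ContinuousOn f (Set.Icc 0 T)) (hca : c < a)
    (hg : ∀ t ∈ Set.Icc 0 T, f t ≤ a → 0 ≤ g t)
    (hbar : ∀ t ∈ Set.Icc 0 T, f t + ∫ s in (0 : ℝ)..t, g s ≤ c) :
    ∀ t ∈ Set.Icc 0 T, f t ≤ c := by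
  have below_of_below : ∀ t ∈ Set.Icc 0 T, (∀ u ∈ Set.Icc 0 t, f u ≤ a) → f t ≤ c := by
    intro t ht hle
    have hint : 0 ≤ ∫ s in (0 : ℝ)..t, g s :=
      intervalIntegral.integral_nonneg ht.1 fun u hu =>
        hg u ⟨hu.1, hu.2.trans ht.2⟩ (hle u hu)
    linarith [hbar t ht]
  suffices hle : ∀ t ∈ Set.Icc 0 T, f t ≤ a from fun t ht =>
    below_of_below t ht fun u hu => hle u ⟨hu.1, hu.2.trans ht.2⟩
  intro t₁ ht₁
  by_contra! hat₁
  have hclosed : IsClosed (Set.Icc 0 T ∩ f ⁻¹' Set.Ici a) :=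
    hf.preimage_isClosed_of_isClosed isClosed_Icc isClosed_Ici
  obtain ⟨t₀, ⟨ht₀, hat₀ : a ≤ f t₀⟩, hleast⟩ :=
    (isCompact_Icc.of_isClosed_subset hclosed Set.inter_subset_left).exists_isLeast
      ⟨t₁, ht₁, hat₁.le⟩
  have hpos : 0 < t₀ := by
    refine ht₀.1.lt_of_ne fun h => ?_
    subst h
    have h0 := hbar 0 ht₀
    rw [intervalIntegral.integral_same, add_zero] at h0
    linarith
  -- `f < a` before the first time `t₀` it reaches `a`, hence `f ≤ a` up to `t₀` by continuity.
  have hbefore : Set.Ico 0 t₀ ⊆ Set.Icc 0 T ∩ f ⁻¹' Set.Iic a := fun u hu => by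
    have hu' : u ∈ Set.Icc 0 T := ⟨hu.1, hu.2.le.trans ht₀.2⟩
    exact ⟨hu', show f u ≤ a from le_of_not_ge fun h => hu.2.not_ge (hleast ⟨hu', h⟩)⟩
  have hupto : Set.Icc 0 t₀ ⊆ Set.Icc 0 T ∩ f ⁻¹' Set.Iic a := by
    rw [← closure_Ico hpos.ne]
    exact closure_minimal hbefore (hf.preimage_isClosed_of_isClosed isClosed_Icc isClosed_Iic)
  linarith [below_of_below t₀ ht₀ fun u hu => (hupto hu).2]

theorem stmt19_general (N : ℕ) (C₃ C₄ M₀ Tstar : ℝ)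
    (hC₃ : 0 < C₃) (hC₄ : 0 < C₄)
    (γ τ : Fin N → ℝ) (hγ : ∀ j, 1 < γ j) (hτ : ∀ j, 0 < τ j)
    (E₁ X : ℝ → ℝ)
    (hEc : ContinuousOn E₁ (Set.Icc 0 Tstar))
    (hEnn : ∀ t ∈ Set.Icc (0:ℝ) Tstar, 0 ≤ E₁ t)
    (hXnn : ∀ t ∈ Set.Icc (0:ℝ) Tstar, 0 ≤ X t)
    (hXb : ∀ t ∈ Set.Icc (0:ℝ) Tstar, X t ≤ 2 * M₀)
    (k : ℝ → ℝ → ℝ)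
    (hk : ∀ x y : ℝ, k x y = C₃ * x - C₄ * ∑ j, x ^ (γ j) * y ^ (τ j))
    (δ₁ : ℝ)
    (a : ℝ) (hapos : 0 < a)
    (ha : C₄ * ∑ j, a ^ (γ j - 1) * (2 * M₀) ^ (τ j) = C₃ / 2)
    (δ : ℝ) (hδ : δ ≤ min δ₁ (a / (2 * C₄)))
    (hE0 : E₁ 0 < δ)
    (hbar : ∀ T ∈ Set.Icc (0:ℝ) Tstar,
      E₁ T + ∫ t in (0:ℝ)..T, k (E₁ t) (X t) ≤ C₄ * E₁ 0) :
    ∀ t ∈ Set.Icc (0:ℝ) Tstar, (C₃ / 2) * E₁ t ≤ k (E₁ t) (X t) := by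
  have hbound : ∀ t ∈ Set.Icc (0:ℝ) Tstar, E₁ t ≤ a → C₃ / 2 * E₁ t ≤ k (E₁ t) (X t) :=
    fun t ht hta => (hk _ _).symm ▸ half_mul_le_sub_sum_rpow_mul_rpow hC₄.le
      (fun j => (hγ j).le) (fun j => (hτ j).le) ha (hEnn t ht) hta (hXnn t ht) (hXb t ht)
  have hsmall : C₄ * E₁ 0 < a := by
    have hδa : C₄ * δ ≤ C₄ * (a / (2 * C₄)) :=
      mul_le_mul_of_nonneg_left (hδ.trans (min_le_right _ _)) hC₄.le
    have : C₄ * (a / (2 * C₄)) = a / 2 := by field_simp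
    nlinarith
  have hstays := le_of_add_intervalIntegral_le hEc hsmall
    (fun t ht hta => (mul_nonneg (by positivity) (hEnn t ht)).trans (hbound t ht hta)) hbar
  exact fun t ht => hbound t ht ((hstays t ht).trans hsmall.le)

/-- continuation/barrier argument (`T** = T*`).  Under the barrier
inequality (i), the smallness `E₁(0) < δ ≤ min{δ₁, δ₂}` (with `δ₁` the root of
`C₄ ∑ⱼ γⱼ x^{γⱼ−1}(2M₀)^{τⱼ} = C₃/2`, `a` the root of
`C₄ ∑ⱼ x^{γⱼ−1}(2M₀)^{τⱼ} = C₃/2`, and `δ₂ = a/(2C₄)`), and the bound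
`X ≤ 2M₀` on `[0,T*]`, one has `k(E₁(t), X(t)) ≥ (C₃/2) E₁(t)` on all of
`[0,T*]`, where `k(x,y) = C₃x − C₄ ∑ⱼ x^{γⱼ} y^{τⱼ}`. -/
theorem stmt19 (N : ℕ) (C₃ C₄ M₀ Tstar : ℝ)
    (hC₃ : 0 < C₃) (hC₄ : 0 < C₄) (hM₀ : 0 < M₀) (hTs : 0 ≤ Tstar)
    (γ τ : Fin N → ℝ) (hγ : ∀ j, 1 < γ j) (hτ : ∀ j, 0 < τ j)
    (E₁ X : ℝ → ℝ)
    (hEc : ContinuousOn E₁ (Set.Icc 0 Tstar))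
    (hXc : ContinuousOn X (Set.Icc 0 Tstar))
    (hEnn : ∀ t ∈ Set.Icc (0:ℝ) Tstar, 0 ≤ E₁ t)
    (hEX : ∀ t ∈ Set.Icc (0:ℝ) Tstar, E₁ t ≤ X t)
    (hXnn : ∀ t ∈ Set.Icc (0:ℝ) Tstar, 0 ≤ X t)
    (hXb : ∀ t ∈ Set.Icc (0:ℝ) Tstar, X t ≤ 2 * M₀)
    (k : ℝ → ℝ → ℝ)
    (hk : ∀ x y : ℝ, k x y = C₃ * x - C₄ * ∑ j, x ^ (γ j) * y ^ (τ j))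
    (δ₁ : ℝ) (hδ₁pos : 0 < δ₁)
    (hδ₁ : C₄ * ∑ j, γ j * δ₁ ^ (γ j - 1) * (2 * M₀) ^ (τ j) = C₃ / 2)
    (a : ℝ) (hapos : 0 < a)
    (ha : C₄ * ∑ j, a ^ (γ j - 1) * (2 * M₀) ^ (τ j) = C₃ / 2)
    (δ : ℝ) (hδ : δ ≤ min δ₁ (a / (2 * C₄)))
    (hE0 : E₁ 0 < δ)
    (hbar : ∀ T ∈ Set.Icc (0:ℝ) Tstar,
      E₁ T + ∫ t in (0:ℝ)..T, k (E₁ t) (X t) ≤ C₄ * E₁ 0) :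
    ∀ t ∈ Set.Icc (0:ℝ) Tstar, (C₃ / 2) * E₁ t ≤ k (E₁ t) (X t) :=
  stmt19_general N C₃ C₄ M₀ Tstar hC₃ hC₄ γ τ hγ hτ E₁ X hEc hEnn hXnn hXb k hk δ₁ a hapos ha δ hδ
    hE0 hbar
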